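/- Single-punisher impact bound: Let p be a probability profile, i ∈ N, and j ∈ (N ∪ {s}) ∖ {i} with p_j[i] < 1 and q_i[p] > 0. Let p' be the profile that agrees with p everywhere except that p'_j[i] < p_j[i]. Then q_i[p'] ≤ q_i[p] · (1 − p'_j[i]) / (1 − p_j[i]). -/

import Mathlib

/-!
Run the two processes from the same state and compare them step by step. While `j` is not yet
infected, every transition weight uses only rows of the profile other than `j`, so the weights of
`p` and `p'` coincide and the bound propagates through the recursion; at termination it holds
because the ratio `(1 - p'_j[i]) / (1 - p_j[i])` is at least `1`. In the step where `j` gets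
infected while `i` is still uninfected, the probability that `i` escapes infection changes by
exactly that ratio (its factor `1 - p_j[i]` becomes `1 - p'_j[i]`), and from then on `j` is
recovered, its row is never read again, and the two processes agree.
-/

/-- The probability `φ[R, I | p, L]` that no node of `L` ever gets infected, in the
epidemic dissemination process on the node set `N`, given that `R` is the set of nodes
infected before the last step, `I` the set of nodes infected in the last step, and
`p` the profile of forwarding probabilities. -/
noncomputable def phi {V : Type*} [Fintype V] [DecidableEq V]
    (N : Finset V) (p : V → V → ℝ) (L : Finset V) (R I : Finset V) : ℝ :=
  if hI : I = ∅ then 1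
  else
    ∑ H ∈ (N \ (R ∪ I ∪ L)).powerset.attach,
      (∏ k ∈ H.1, (1 - ∏ l ∈ I, (1 - p l k))) *
        (∏ k ∈ N \ (H.1 ∪ R ∪ I), ∏ l ∈ I, (1 - p l k)) *
        phi N p L (R ∪ I) H.1
termination_by (Finset.univ \ (R ∪ I)).card * 2 + I.card
decreasing_by
  have hHsub : H.1 ⊆ Finset.univ \ (R ∪ I) := by
    intro x hx
    have hx' := Finset.mem_powerset.mp H.2 hx
    rw [Finset.mem_sdiff] at hx' ⊢
    exact ⟨Finset.mem_univ x, fun hc => hx'.2 (Finset.mem_union_left _ hc)⟩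
  have heq : Finset.univ \ (R ∪ I ∪ H.1) = (Finset.univ \ (R ∪ I)) \ H.1 := by
    ext x
    simp only [Finset.mem_sdiff, Finset.mem_union, Finset.mem_univ, true_and]
    tauto
  have hcard : (Finset.univ \ (R ∪ I ∪ H.1)).card
      = (Finset.univ \ (R ∪ I)).card - H.1.card := by
    rw [heq, Finset.card_sdiff, Finset.inter_eq_left.mpr hHsub]
  have hle : H.1.card ≤ (Finset.univ \ (R ∪ I)).card := Finset.card_le_card hHsub
  have hpos : 0 < I.card := Finset.card_pos.mpr (Finset.nonempty_iff_ne_empty.mpr hI)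
  omega

open Finset

section

variable {V : Type*}

/- `P[I,H|p]` and `Q[N,R,I,H|p]` of the recursion defining `phi`. -/
def newlyInfectedProb (p : V → V → ℝ) (I H : Finset V) : ℝ :=
  ∏ k ∈ H, (1 - ∏ l ∈ I, (1 - p l k))

lemma newlyInfectedProb_congr {p p' : V → V → ℝ} {I H : Finset V}
    (h : ∀ l ∈ I, ∀ k ∈ H, p' l k = p l k) :
    newlyInfectedProb p' I H = newlyInfectedProb p I H :=
  prod_congr rfl fun k hk => congrArg (1 - ·) (prod_congr rfl fun l hl => by rw [h l hl k hk])

lemma newlyInfectedProb_nonneg {p : V → V → ℝ} {I H : Finset V}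
    (hp : ∀ l ∈ I, ∀ k ∈ H, 0 ≤ p l k ∧ p l k ≤ 1) : 0 ≤ newlyInfectedProb p I H :=
  prod_nonneg fun k hk => sub_nonneg.mpr <| prod_le_one
    (fun l hl => sub_nonneg.mpr (hp l hl k hk).2) (fun l hl => by linarith [(hp l hl k hk).1])

variable [DecidableEq V]

def uninfectedProb (N : Finset V) (p : V → V → ℝ) (R I H : Finset V) : ℝ :=
  ∏ k ∈ N \ (H ∪ R ∪ I), ∏ l ∈ I, (1 - p l k)

lemma uninfectedProb_congr {N : Finset V} {p p' : V → V → ℝ} {R I H : Finset V}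
    (h : ∀ l ∈ I, ∀ k ∈ N \ (H ∪ R ∪ I), p' l k = p l k) :
    uninfectedProb N p' R I H = uninfectedProb N p R I H :=
  prod_congr rfl fun k hk => prod_congr rfl fun l hl => by rw [h l hl k hk]

lemma uninfectedProb_nonneg {N : Finset V} {p : V → V → ℝ} {R I H : Finset V}
    (hp : ∀ l ∈ I, ∀ k ∈ N \ (H ∪ R ∪ I), p l k ≤ 1) : 0 ≤ uninfectedProb N p R I H :=
  prod_nonneg fun k hk => prod_nonneg fun l hl => sub_nonneg.mpr (hp l hl k hk)

lemma uninfectedProb_update {N : Finset V} {p p' : V → V → ℝ} {R I H : Finset V} {i j : V}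
    (hagree : ∀ l k, ¬ (l = j ∧ k = i) → p' l k = p l k)
    (hi : i ∈ N \ (H ∪ R ∪ I)) (hj : j ∈ I) :
    (1 - p j i) * uninfectedProb N p' R I H = (1 - p' j i) * uninfectedProb N p R I H := by
  have hsplit : ∀ q : V → V → ℝ, uninfectedProb N q R I H = (1 - q j i) *
      ((∏ l ∈ I.erase j, (1 - q l i)) * ∏ k ∈ (N \ (H ∪ R ∪ I)).erase i, ∏ l ∈ I, (1 - q l k)) :=
    fun q => by rw [uninfectedProb, ← mul_prod_erase _ _ hi, ← mul_prod_erase _ _ hj, mul_assoc]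
  have hrow : ∏ l ∈ I.erase j, (1 - p' l i) = ∏ l ∈ I.erase j, (1 - p l i) :=
    prod_congr rfl fun l hl => by rw [hagree l i fun h => ne_of_mem_erase hl h.1]
  have hrest : ∏ k ∈ (N \ (H ∪ R ∪ I)).erase i, ∏ l ∈ I, (1 - p' l k)
      = ∏ k ∈ (N \ (H ∪ R ∪ I)).erase i, ∏ l ∈ I, (1 - p l k) :=
    prod_congr rfl fun k hk => prod_congr rfl fun l _ => by
      rw [hagree l k fun h => ne_of_mem_erase hk h.2]
  rw [hsplit p', hsplit p, hrow, hrest]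
  ring

lemma card_sdiff_union_mul_two_add_card_lt [Fintype V] {R I H : Finset V}
    (hH : Disjoint H (R ∪ I)) (hI : I ≠ ∅) :
    #(univ \ (R ∪ I ∪ H)) * 2 + #H < #(univ \ (R ∪ I)) * 2 + #I := by
  have hsub : H ⊆ univ \ (R ∪ I) := subset_sdiff.mpr ⟨subset_univ H, hH⟩
  have hcard := card_sdiff_add_card_eq_card hsub
  rw [sdiff_sdiff_left, sup_eq_union] at hcard
  have := card_pos.mpr (nonempty_iff_ne_empty.mpr hI)
  omega

theorem phi_induction [Fintype V] (N L : Finset V) {motive : Finset V → Finset V → Prop}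
    (empty : ∀ R, motive R ∅)
    (step : ∀ R I, I ≠ ∅ → (∀ H ⊆ N \ (R ∪ I ∪ L), motive (R ∪ I) H) → motive R I)
    (R I : Finset V) : motive R I := by
  by_cases hI : I = ∅
  · exact hI ▸ empty R
  · exact step R I hI fun H hH => phi_induction N L empty step (R ∪ I) H
termination_by #(univ \ (R ∪ I)) * 2 + #I
decreasing_by
  exact card_sdiff_union_mul_two_add_card_lt
    (disjoint_of_subset_left hH (disjoint_sdiff_self_left.mono_right subset_union_left)) hI

variable [Fintype V] (N : Finset V)

lemma phi_empty (p : V → V → ℝ) (L R : Finset V) : phi N p L R ∅ = 1 := by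
  rw [phi, dif_pos rfl]

lemma phi_of_ne_empty (p : V → V → ℝ) (L R : Finset V) {I : Finset V} (hI : I ≠ ∅) :
    phi N p L R I = ∑ H ∈ (N \ (R ∪ I ∪ L)).powerset,
      newlyInfectedProb p I H * uninfectedProb N p R I H * phi N p L (R ∪ I) H := by
  rw [phi, dif_neg hI]
  exact sum_attach _ fun H =>
    newlyInfectedProb p I H * uninfectedProb N p R I H * phi N p L (R ∪ I) H

lemma phi_congr_of_mem {p p' : V → V → ℝ} {L : Finset V} {j : V}
    (hagree : ∀ l ≠ j, ∀ k, p' l k = p l k) {R I : Finset V} (hjR : j ∈ R) (hjI : j ∉ I) :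
    phi N p' L R I = phi N p L R I := by
  induction R, I using phi_induction N L with
  | empty R => rw [phi_empty, phi_empty]
  | step R I hI ih =>
    rw [phi_of_ne_empty N _ _ _ hI, phi_of_ne_empty N _ _ _ hI]
    refine sum_congr rfl fun H hH => ?_
    have hrows : ∀ l ∈ I, ∀ k, p' l k = p l k :=
      fun l hl => hagree l (ne_of_mem_of_not_mem hl hjI)
    have hjH : j ∉ H := fun h => by simpa [hjR] using mem_powerset.mp hH h
    rw [newlyInfectedProb_congr fun l hl k _ => hrows l hl k,
      uninfectedProb_congr fun l hl k _ => hrows l hl k, ih H (mem_powerset.mp hH)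
      (mem_union_left _ hjR) hjH]

lemma summand_eq_div_mul_of_mem {p p' : V → V → ℝ} {i j : V} (hi : i ∈ N) (hpj : p j i < 1)
    (hagree : ∀ l k, ¬ (l = j ∧ k = i) → p' l k = p l k) {R I H : Finset V}
    (hH : H ⊆ N \ (R ∪ I ∪ {i})) (hiR : i ∉ R) (hiI : i ∉ I) (hjI : j ∈ I) :
    newlyInfectedProb p' I H * uninfectedProb N p' R I H * phi N p' {i} (R ∪ I) H =
      (1 - p' j i) / (1 - p j i) *
        (newlyInfectedProb p I H * uninfectedProb N p R I H * phi N p {i} (R ∪ I) H) := by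
  have hiH : i ∉ H := fun h => by simpa using hH h
  have hjH : j ∉ H := fun h => by simpa [hjI] using hH h
  have hP : newlyInfectedProb p' I H = newlyInfectedProb p I H :=
    newlyInfectedProb_congr fun l _ k hk => hagree l k fun h => hiH (h.2 ▸ hk)
  have hphi : phi N p' {i} (R ∪ I) H = phi N p {i} (R ∪ I) H :=
    phi_congr_of_mem N (fun l hl k => hagree l k fun h => hl h.1) (mem_union_right _ hjI) hjH
  have hiQ : i ∈ N \ (H ∪ R ∪ I) := by simp [hi, hiH, hiR, hiI]
  have hQ := uninfectedProb_update hagree hiQ hjI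
  rw [hP, hphi, div_mul_eq_mul_div, eq_div_iff (by linarith)]
  linear_combination (newlyInfectedProb p I H * phi N p {i} (R ∪ I) H) * hQ

lemma phi_le_div_mul_phi (s : V) {p p' : V → V → ℝ}
    (hp : ∀ l ∈ insert s N, ∀ k ∈ N, 0 ≤ p l k ∧ p l k ≤ 1) {i j : V} (hi : i ∈ N)
    (hpj : p j i < 1) (hagree : ∀ l k, ¬ (l = j ∧ k = i) → p' l k = p l k)
    (hle : p' j i ≤ p j i) {R I : Finset V} (hIs : I ⊆ insert s N) (hiR : i ∉ R) (hiI : i ∉ I)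
    (hjR : j ∉ R) :
    phi N p' {i} R I ≤ (1 - p' j i) / (1 - p j i) * phi N p {i} R I := by
  have hpos : 0 < 1 - p j i := by linarith
  induction R, I using phi_induction N {i} with
  | empty R =>
    rw [phi_empty, phi_empty, mul_one, le_div_iff₀ hpos]
    linarith
  | step R I hI ih =>
    rw [phi_of_ne_empty N _ _ _ hI, phi_of_ne_empty N _ _ _ hI, mul_sum]
    by_cases hjI : j ∈ I
    · exact (sum_congr rfl fun H hH =>
        summand_eq_div_mul_of_mem N hi hpj hagree (mem_powerset.mp hH) hiR hiI hjI).le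
    · refine sum_le_sum fun H hH => ?_
      have hHsub := mem_powerset.mp hH
      have hHN : H ⊆ N := hHsub.trans sdiff_subset
      have hrows : ∀ l ∈ I, ∀ k, p' l k = p l k :=
        fun l hl k => hagree l k fun h => hjI (h.1 ▸ hl)
      have hweight : 0 ≤ newlyInfectedProb p I H * uninfectedProb N p R I H :=
        mul_nonneg (newlyInfectedProb_nonneg fun l hl k hk => hp l (hIs hl) k (hHN hk))
          (uninfectedProb_nonneg fun l hl k hk => (hp l (hIs hl) k (mem_sdiff.mp hk).1).2)
      have hrec := ih H hHsub (hHN.trans (subset_insert s N)) (by simp [hiR, hiI])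
        (fun h => by simpa using hHsub h) (by simp [hjR, hjI])
      rw [newlyInfectedProb_congr fun l hl k _ => hrows l hl k,
        uninfectedProb_congr fun l hl k _ => hrows l hl k]
      calc _ ≤ newlyInfectedProb p I H * uninfectedProb N p R I H *
            ((1 - p' j i) / (1 - p j i) * phi N p {i} (R ∪ I) H) :=
            mul_le_mul_of_nonneg_left hrec hweight
        _ = _ := by ring

end

theorem single_punisher_impact_general
    {V : Type*} [Fintype V] [DecidableEq V]
    (N : Finset V) (s : V) (hs : s ∉ N)
    (p : V → V → ℝ)
    (hp : ∀ l ∈ insert s N, ∀ k ∈ N, 0 ≤ p l k ∧ p l k ≤ 1)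
    (i : V) (hi : i ∈ N)
    (j : V)
    (hpj : p j i < 1)
    (p' : V → V → ℝ)
    (hagree : ∀ l k, ¬ (l = j ∧ k = i) → p' l k = p l k)
    (hless : p' j i < p j i) :
    phi N p' {i} ∅ {s} ≤ phi N p {i} ∅ {s} * (1 - p' j i) / (1 - p j i) := by
  rw [mul_div_assoc, mul_comm]
  exact phi_le_div_mul_phi N s hp hi hpj hagree hless.le
    (singleton_subset_iff.mpr (mem_insert_self s N)) (notMem_empty i)
    (notMem_singleton.mpr (ne_of_mem_of_not_mem hi hs)) (notMem_empty j)

/-- **Single-punisher impact bound.**  If `p'` agrees with `p` except that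
`p'_j[i] < p_j[i]`, with `p_j[i] < 1` and `q_i[p] > 0`, then
`q_i[p'] ≤ q_i[p] · (1 − p'_j[i]) / (1 − p_j[i])`. -/
theorem single_punisher_impact
    {V : Type*} [Fintype V] [DecidableEq V]
    (N : Finset V) (s : V) (hs : s ∉ N)
    (p : V → V → ℝ)
    (hp : ∀ l ∈ insert s N, ∀ k ∈ N, 0 ≤ p l k ∧ p l k ≤ 1)
    (i : V) (hi : i ∈ N)
    (j : V) (hj : j ∈ insert s N) (hji : j ≠ i)
    (hpj : p j i < 1)
    (hq : 0 < phi N p {i} ∅ {s})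
    (p' : V → V → ℝ)
    (hagree : ∀ l k, ¬ (l = j ∧ k = i) → p' l k = p l k)
    (hless : p' j i < p j i) (hnn : 0 ≤ p' j i) :
    phi N p' {i} ∅ {s} ≤ phi N p {i} ∅ {s} * (1 - p' j i) / (1 - p j i) :=
  single_punisher_impact_general N s hs p hp i hi j hpj p' hagree hless
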